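/- Let J be a 2-torsion free and (n−1)-torsion free Jordan ring with nontrivial idempotent e satisfying conditions (i)–(iii), and let D : J → J be an n-multiplicative derivation with D(e) = 0. Then D preserves each Peirce component: D(J_i) ⊆ J_i for i ∈ {1, 1/2, 0}. -/

import Mathlib

/-!
Feeding the lists `x e ⋯ e` and `e ⋯ e x y` to `D` (with `D e = 0`) shows that `D` commutes with
`L_e = (e * ·)` and that `L_eᵐ (D(xy) - D x y - x D y) = 0`. As `L_e (2 L_e - 1) (L_e - 1) = 0`,
this already gives `e D(xy) = e (D x y + x D y)`, and commuting with `L_e` makes `J₁` and `J₀`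
invariant. For `a ∈ J_{1/2}` the element `D a = e D(2a)` has no `J₀`-component; writing `u`, `b` for
the `J₁`-components of `D t`, `D a` (`t ∈ J_{1/2}`), the `J_{1/2}`-component of
`e D(ta) = D(e(ta)) ∈ J₁` is `(u a + t b)/2`, hence `u a + t b = 0`. Since `a` and `2a` have the
same `b`, this gives `t b = 0`, and condition (i) forces `b = 0`.
-/

/-- Peirce 1-component relative to `e`: elements `x` with `e*x = x`. -/
def peirce1 {J : Type*} [Mul J] (e : J) : Set J := {x | e * x = x}

/-- Peirce 1/2-component relative to `e`: elements `x` with `e*x = (1/2)x`, i.e. `e*x + e*x = x`. -/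
def peirceHalf {J : Type*} [Mul J] [Add J] (e : J) : Set J := {x | e * x + e * x = x}

/-- Peirce 0-component relative to `e`: elements `x` with `e*x = 0`. -/
def peirce0 {J : Type*} [Mul J] [Zero J] (e : J) : Set J := {x | e * x = 0}

/-- The right-normed nonassociative monomial `x₁(x₂(⋯(x_{n-1}x_n)⋯))` on a list of arguments. -/
def rnm {J : Type*} [Mul J] [Zero J] : List J → J
  | [] => 0
  | [x] => x
  | x :: y :: l => x * rnm (y :: l)

/-- `d` is an `n`-multiplicative derivation (w.r.t. the right-normed monomial of degree `n`):
`d(m(x₁,…,xₙ)) = Σᵢ m(x₁,…,d(xᵢ),…,xₙ)`. -/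
def IsNDer {J : Type*} [NonUnitalNonAssocRing J] (n : ℕ) (d : J → J) : Prop :=
  ∀ l : List J, l.length = n →
    d (rnm l) = ∑ i ∈ Finset.range n, rnm (l.set i (d (l.getD i 0)))

section Monomial

variable {J : Type*}

theorem rnm_cons_of_ne_nil [Mul J] [Zero J] (x : J) {l : List J} (hl : l ≠ []) :
    rnm (x :: l) = x * rnm l := by
  cases l with
  | nil => exact absurd rfl hl
  | cons y t => rfl

theorem rnm_eq_zero_of_zero_mem [MulZeroClass J] {l : List J} (h : (0 : J) ∈ l) : rnm l = 0 := by
  induction l with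
  | nil => simp at h
  | cons x t ih =>
    rcases t with _ | ⟨y, s⟩
    · exact (List.mem_singleton.mp h).symm
    · rw [rnm_cons_of_ne_nil x (List.cons_ne_nil y s)]
      rcases List.mem_cons.mp h with rfl | h
      · exact zero_mul _
      · rw [ih h, mul_zero]

theorem rnm_set_zero [MulZeroClass J] {l : List J} {i : ℕ} (hi : i < l.length) :
    rnm (l.set i 0) = 0 :=
  rnm_eq_zero_of_zero_mem (List.mem_set hi 0)

theorem rnm_replicate_of_mul_self_eq [Mul J] [Zero J] {e : J} (hid : e * e = e) (k : ℕ) :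
    rnm (List.replicate (k + 1) e) = e := by
  induction k with
  | zero => rfl
  | succ k ih => rw [List.replicate_succ, rnm_cons_of_ne_nil _ (by simp), ih, hid]

theorem rnm_replicate_append_pair [Mul J] [Zero J] (e x y : J) (k : ℕ) :
    rnm (List.replicate k e ++ [x, y]) = (e * ·)^[k] (x * y) := by
  induction k with
  | zero => rfl
  | succ k ih =>
    rw [List.replicate_succ, List.cons_append, rnm_cons_of_ne_nil _ (by simp), ih,
      Function.iterate_succ_apply']

end Monomial

namespace IsNDer

variable {J : Type*} [NonUnitalNonAssocRing J] {n m : ℕ} {D : J → J} {e : J}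

theorem map_mul_idem (hD : IsNDer n D) (hn : 2 ≤ n) (hid : e * e = e) (hDe : D e = 0) (x : J) :
    D (x * e) = D x * e := by
  obtain ⟨m, rfl⟩ := Nat.exists_eq_add_of_le' hn
  have h := hD (x :: List.replicate (m + 1) e) (by simp)
  rw [Finset.sum_range_succ', Finset.sum_eq_zero, zero_add] at h
  · simpa [rnm_cons_of_ne_nil, rnm_replicate_of_mul_self_eq hid] using h
  · intro i hi
    have hi : i < m + 1 := Finset.mem_range.mp hi
    rw [List.getD_cons_succ, List.getD_replicate e hi, hDe]
    exact rnm_set_zero (by simpa using hi)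

theorem map_iterate_mul_left_mul (hD : IsNDer (m + 2) D) (hDe : D e = 0) (x y : J) :
    D ((e * ·)^[m] (x * y)) = (e * ·)^[m] (D x * y) + (e * ·)^[m] (x * D y) := by
  have h := hD (List.replicate m e ++ [x, y]) (by simp)
  rw [Finset.sum_range_succ, Finset.sum_range_succ, Finset.sum_eq_zero, zero_add] at h
  · simpa [rnm_replicate_append_pair, List.getD_append_right, List.set_append_right] using h
  · intro i hi
    have hi : i < m := Finset.mem_range.mp hi
    rw [List.getD_append _ _ _ _ (by simpa using hi), List.getD_replicate e hi, hDe]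
    exact rnm_set_zero (hi.trans_le (by simp))

theorem map_zero (hD : IsNDer n D) (hn : 2 ≤ n) : D 0 = 0 := by
  obtain ⟨m, rfl⟩ := Nat.exists_eq_add_of_le' hn
  have h := hD (List.replicate (m + 2) 0) List.length_replicate
  rw [rnm_eq_zero_of_zero_mem (List.mem_replicate.2 ⟨by omega, rfl⟩)] at h
  rw [h]
  refine Finset.sum_eq_zero fun i _ => rnm_eq_zero_of_zero_mem ?_
  rcases i with _ | i <;> simp [List.replicate_succ]

end IsNDer

section Peirce

variable {J : Type*} [NonUnitalNonAssocCommRing J] {e : J}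

theorem mem_peirce1 {x : J} : x ∈ peirce1 e ↔ e * x = x := Iff.rfl

theorem mem_peirceHalf {x : J} : x ∈ peirceHalf e ↔ e * x + e * x = x := Iff.rfl

theorem mem_peirce0 {x : J} : x ∈ peirce0 e ↔ e * x = 0 := Iff.rfl

theorem add_mem_peirce1 {x y : J} (hx : x ∈ peirce1 e) (hy : y ∈ peirce1 e) :
    x + y ∈ peirce1 e := by
  rw [mem_peirce1] at *
  rw [mul_add, hx, hy]

theorem sub_mem_peirce1 {x y : J} (hx : x ∈ peirce1 e) (hy : y ∈ peirce1 e) :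
    x - y ∈ peirce1 e := by
  rw [mem_peirce1] at *
  rw [mul_sub, hx, hy]

theorem add_mem_peirceHalf {x y : J} (hx : x ∈ peirceHalf e) (hy : y ∈ peirceHalf e) :
    x + y ∈ peirceHalf e := by
  rw [mem_peirceHalf] at *
  rw [mul_add]
  linear_combination (norm := abel1) hx + hy

theorem eq_zero_of_mem_peirce1_of_mem_peirceHalf {x : J} (h1 : x ∈ peirce1 e)
    (hh : x ∈ peirceHalf e) : x = 0 := by
  rw [mem_peirce1] at h1
  rw [mem_peirceHalf, h1] at hh
  simpa using hh

theorem jordan_linearized (hJ : ∀ x y : J, ((x * x) * y) * x = (x * x) * (y * x))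
    (h2 : ∀ x : J, x + x = 0 → x = 0) (x z y : J) :
    ((x*z)*y)*x + ((x*z)*y)*x + ((x*x)*y)*z = (x*z)*(y*x) + (x*z)*(y*x) + (x*x)*(y*z) := by
  rw [← sub_eq_zero]
  apply h2
  have hp := hJ (x + z) y
  have hm := hJ (x - z) y
  have hz := hJ z y
  simp only [mul_add, add_mul, mul_sub, sub_mul] at hp hm hz ⊢
  simp only [mul_comm] at hp hm hz ⊢
  linear_combination (norm := abel1) hp - hm - hz - hz

theorem mul_left_cubic (hJ : ∀ x y : J, ((x * x) * y) * x = (x * x) * (y * x))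
    (h2 : ∀ x : J, x + x = 0 → x = 0) (hid : e * e = e) (z : J) :
    e * (e * (e * z)) + e * (e * (e * z)) + e * z = e * (e * z) + e * (e * z) + e * (e * z) := by
  have h := jordan_linearized hJ h2 e z e
  simp only [hid, mul_comm _ e] at h
  linear_combination (norm := abel1) h

theorem mul_left_eq_zero_of_iterate_eq_zero (hJ : ∀ x y : J, ((x * x) * y) * x = (x * x) * (y * x))
    (h2 : ∀ x : J, x + x = 0 → x = 0) (hid : e * e = e) {k : ℕ} {z : J}
    (hz : (e * ·)^[k] z = 0) : e * z = 0 := by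
  induction k generalizing z with
  | zero => rw [show z = 0 from hz, mul_zero]
  | succ k ih =>
    have hz2 : e * (e * z) = 0 := ih hz
    have h := mul_left_cubic hJ h2 hid z
    rw [hz2, mul_zero, add_zero, add_zero] at h
    simpa using h

def peirceProj1 (e x : J) : J := e * (e * x) + e * (e * x) - e * x

theorem peirceProj1_mem (hJ : ∀ x y : J, ((x * x) * y) * x = (x * x) * (y * x))
    (h2 : ∀ x : J, x + x = 0 → x = 0) (hid : e * e = e) (x : J) : peirceProj1 e x ∈ peirce1 e := by
  rw [mem_peirce1, peirceProj1, mul_sub, mul_add]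
  linear_combination (norm := abel1) mul_left_cubic hJ h2 hid x

theorem peirceProj1_mul_left (hJ : ∀ x y : J, ((x * x) * y) * x = (x * x) * (y * x))
    (h2 : ∀ x : J, x + x = 0 → x = 0) (hid : e * e = e) (x : J) :
    peirceProj1 e (e * x) = peirceProj1 e x := by
  rw [peirceProj1, peirceProj1]
  linear_combination (norm := abel1) mul_left_cubic hJ h2 hid x

theorem mul_left_sub_peirceProj1_mem (hJ : ∀ x y : J, ((x * x) * y) * x = (x * x) * (y * x))
    (h2 : ∀ x : J, x + x = 0 → x = 0) (hid : e * e = e) (x : J) :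
    e * x - peirceProj1 e (e * x) ∈ peirceHalf e := by
  have h := mul_left_cubic hJ h2 hid
  rw [mem_peirceHalf, peirceProj1_mul_left hJ h2 hid, peirceProj1]
  simp only [mul_sub, mul_add]
  linear_combination (norm := abel1) - h x - h x

theorem mul_mem_peirceHalf_of_mem_peirce1 (hJ : ∀ x y : J, ((x * x) * y) * x = (x * x) * (y * x))
    (h2 : ∀ x : J, x + x = 0 → x = 0) (hid : e * e = e) {u s : J} (hu : u ∈ peirce1 e)
    (hs : s ∈ peirceHalf e) : u * s ∈ peirceHalf e := by
  rw [mem_peirce1] at hu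
  rw [mem_peirceHalf] at *
  have h := jordan_linearized hJ h2 e u s
  simp only [hid, hu, mul_comm _ e, mul_comm s u, mul_comm (e * s) u] at h
  have hcomm : e * (u * s) = u * (e * s) := by linear_combination (norm := abel1) h
  rw [hcomm, ← mul_add, hs]

theorem mul_left_mul_self_mem_peirce1 (hJ : ∀ x y : J, ((x * x) * y) * x = (x * x) * (y * x))
    (h2 : ∀ x : J, x + x = 0 → x = 0) (hid : e * e = e) {s : J} (hs : s ∈ peirceHalf e) :
    e * (s * s) ∈ peirce1 e := by
  rw [mem_peirceHalf] at hs
  have h := jordan_linearized hJ h2 s e e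
  simp only [hid, mul_comm _ e, mul_comm (e * (e * s)) s] at h
  have hs' : e * (e * s) + e * (e * s) = e * s := by rw [← mul_add, hs]
  have l1 : s * (e * (e * s)) + s * (e * (e * s)) = s * (e * s) := by rw [← mul_add, hs']
  have l2 : (e * s) * (e * s) + (e * s) * (e * s) = s * (e * s) := by
    rw [← mul_add, hs, mul_comm]
  rw [mem_peirce1]
  linear_combination (norm := abel1) h - l1 + l2

theorem mul_left_mul_mem_peirce1 (hJ : ∀ x y : J, ((x * x) * y) * x = (x * x) * (y * x))
    (h2 : ∀ x : J, x + x = 0 → x = 0) (hid : e * e = e) {s t : J} (hs : s ∈ peirceHalf e)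
    (ht : t ∈ peirceHalf e) : e * (s * t) ∈ peirce1 e := by
  have hst := mul_left_mul_self_mem_peirce1 hJ h2 hid (add_mem_peirceHalf hs ht)
  have hss := mul_left_mul_self_mem_peirce1 hJ h2 hid hs
  have htt := mul_left_mul_self_mem_peirce1 hJ h2 hid ht
  rw [mem_peirce1] at *
  simp only [mul_add, add_mul, mul_comm t s] at hst
  rw [← sub_eq_zero]
  apply h2
  linear_combination (norm := abel1) hst - hss - htt

end Peirce

namespace IsNDer

variable {J : Type*} [NonUnitalNonAssocCommRing J] {n : ℕ} {D : J → J} {e : J}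

theorem map_idem_mul (hD : IsNDer n D) (hn : 2 ≤ n) (hid : e * e = e) (hDe : D e = 0) (x : J) :
    D (e * x) = e * D x := by
  simpa only [mul_comm _ e] using hD.map_mul_idem hn hid hDe x

theorem mapsTo_peirce1 (hD : IsNDer n D) (hn : 2 ≤ n) (hid : e * e = e) (hDe : D e = 0) :
    Set.MapsTo D (peirce1 e) (peirce1 e) := fun a ha => by
  rw [mem_peirce1] at ha ⊢
  rw [← hD.map_idem_mul hn hid hDe a, ha]

theorem mapsTo_peirce0 (hD : IsNDer n D) (hn : 2 ≤ n) (hid : e * e = e) (hDe : D e = 0) :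
    Set.MapsTo D (peirce0 e) (peirce0 e) := fun a ha => by
  rw [mem_peirce0] at ha ⊢
  rw [← hD.map_idem_mul hn hid hDe a, ha, hD.map_zero hn]

theorem mul_left_map_mul (hD : IsNDer n D) (hn : 2 ≤ n)
    (hJ : ∀ x y : J, ((x * x) * y) * x = (x * x) * (y * x)) (h2 : ∀ x : J, x + x = 0 → x = 0)
    (hid : e * e = e) (hDe : D e = 0) (x y : J) :
    e * D (x * y) = e * (D x * y + x * D y) := by
  obtain ⟨m, rfl⟩ := Nat.exists_eq_add_of_le' hn
  have h := hD.map_iterate_mul_left_mul hDe x y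
  rw [Function.Commute.iterate_right (hD.map_idem_mul hn hid hDe) m, ← AddMonoidHom.coe_mulLeft,
    ← iterate_map_add, ← sub_eq_zero, ← iterate_map_sub] at h
  rw [← sub_eq_zero, ← mul_sub]
  exact mul_left_eq_zero_of_iterate_eq_zero hJ h2 hid h

theorem map_eq_mul_left_map_add_self (hD : IsNDer n D) (hn : 2 ≤ n) (hid : e * e = e)
    (hDe : D e = 0) {a : J} (ha : a ∈ peirceHalf e) : D a = e * D (a + a) := by
  rw [mem_peirceHalf, ← mul_add] at ha
  conv_lhs => rw [← ha]
  exact hD.map_idem_mul hn hid hDe (a + a)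

theorem map_sub_peirceProj1_mem (hD : IsNDer n D) (hn : 2 ≤ n)
    (hJ : ∀ x y : J, ((x * x) * y) * x = (x * x) * (y * x)) (h2 : ∀ x : J, x + x = 0 → x = 0)
    (hid : e * e = e) (hDe : D e = 0) {a : J} (ha : a ∈ peirceHalf e) :
    D a - peirceProj1 e (D a) ∈ peirceHalf e := by
  rw [hD.map_eq_mul_left_map_add_self hn hid hDe ha]
  exact mul_left_sub_peirceProj1_mem hJ h2 hid _

theorem peirceProj1_map_mul_add_mul_peirceProj1_map (hD : IsNDer n D) (hn : 2 ≤ n)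
    (hJ : ∀ x y : J, ((x * x) * y) * x = (x * x) * (y * x)) (h2 : ∀ x : J, x + x = 0 → x = 0)
    (hid : e * e = e) (hDe : D e = 0) {t a : J} (ht : t ∈ peirceHalf e) (ha : a ∈ peirceHalf e) :
    peirceProj1 e (D t) * a + t * peirceProj1 e (D a) = 0 := by
  set u := peirceProj1 e (D t)
  set b := peirceProj1 e (D a)
  have hu : u ∈ peirce1 e := peirceProj1_mem hJ h2 hid _
  have hb : b ∈ peirce1 e := peirceProj1_mem hJ h2 hid _
  have hua : u * a ∈ peirceHalf e := mul_mem_peirceHalf_of_mem_peirce1 hJ h2 hid hu ha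
  have htb : t * b ∈ peirceHalf e :=
    mul_comm b t ▸ mul_mem_peirceHalf_of_mem_peirce1 hJ h2 hid hb ht
  set X := e * D (t * a)
  have hX : X ∈ peirce1 e := by
    have := hD.mapsTo_peirce1 hn hid hDe (mul_left_mul_mem_peirce1 hJ h2 hid ht ha)
    rwa [hD.map_idem_mul hn hid hDe] at this
  set w := e * ((D t - u) * a) + e * (t * (D a - b))
  have hw : w ∈ peirce1 e := add_mem_peirce1
    (mul_left_mul_mem_peirce1 hJ h2 hid (hD.map_sub_peirceProj1_mem hn hJ h2 hid hDe ht) ha)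
    (mul_left_mul_mem_peirce1 hJ h2 hid ht (hD.map_sub_peirceProj1_mem hn hJ h2 hid hDe ha))
  have hXw : X + X = u * a + t * b + (w + w) := by
    rw [mem_peirceHalf] at hua htb
    simp only [X, w, hD.mul_left_map_mul hn hJ h2 hid hDe, mul_add, mul_sub, sub_mul]
    linear_combination (norm := abel1) hua + htb
  refine eq_zero_of_mem_peirce1_of_mem_peirceHalf ?_ (add_mem_peirceHalf hua htb)
  rw [show u * a + t * b = X + X - (w + w) by rw [hXw]; abel]
  exact sub_mem_peirce1 (add_mem_peirce1 hX hX) (add_mem_peirce1 hw hw)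

theorem peirceProj1_map_eq_zero (hD : IsNDer n D) (hn : 2 ≤ n)
    (hJ : ∀ x y : J, ((x * x) * y) * x = (x * x) * (y * x)) (h2 : ∀ x : J, x + x = 0 → x = 0)
    (hid : e * e = e) (hDe : D e = 0)
    (hcond1 : ∀ a ∈ peirce1 e, (∀ t ∈ peirceHalf e, t * a = 0) → a = 0)
    {a : J} (ha : a ∈ peirceHalf e) : peirceProj1 e (D a) = 0 := by
  refine hcond1 _ (peirceProj1_mem hJ h2 hid _) fun t ht => ?_
  have hta := hD.peirceProj1_map_mul_add_mul_peirceProj1_map hn hJ h2 hid hDe ht ha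
  have htaa := hD.peirceProj1_map_mul_add_mul_peirceProj1_map hn hJ h2 hid hDe ht
    (add_mem_peirceHalf ha ha)
  rw [hD.map_eq_mul_left_map_add_self hn hid hDe ha, peirceProj1_mul_left hJ h2 hid] at hta ⊢
  rw [mul_add] at htaa
  linear_combination (norm := abel1) hta + hta - htaa

theorem mapsTo_peirceHalf (hD : IsNDer n D) (hn : 2 ≤ n)
    (hJ : ∀ x y : J, ((x * x) * y) * x = (x * x) * (y * x)) (h2 : ∀ x : J, x + x = 0 → x = 0)
    (hid : e * e = e) (hDe : D e = 0)
    (hcond1 : ∀ a ∈ peirce1 e, (∀ t ∈ peirceHalf e, t * a = 0) → a = 0) :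
    Set.MapsTo D (peirceHalf e) (peirceHalf e) := fun a ha => by
  simpa [hD.peirceProj1_map_eq_zero hn hJ h2 hid hDe hcond1 ha]
    using hD.map_sub_peirceProj1_mem hn hJ h2 hid hDe ha

end IsNDer

theorem nDer_preserves_peirce_general {n : ℕ} (hn : 2 ≤ n) {J : Type*} [NonUnitalNonAssocCommRing J]
    (hJordan : ∀ x y : J, ((x * x) * y) * x = (x * x) * (y * x))
    (h2 : ∀ x : J, x + x = 0 → x = 0)
    (e : J) (hid : e * e = e)
    (hcond1 : ∀ a ∈ peirce1 e, (∀ t ∈ peirceHalf e, t * a = 0) → a = 0)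
    (D : J → J) (hder : IsNDer n D) (hDe : D e = 0) :
    (∀ a ∈ peirce1 e, D a ∈ peirce1 e) ∧
    (∀ a ∈ peirceHalf e, D a ∈ peirceHalf e) ∧
    (∀ a ∈ peirce0 e, D a ∈ peirce0 e) :=
  ⟨hder.mapsTo_peirce1 hn hid hDe, hder.mapsTo_peirceHalf hn hJordan h2 hid hDe hcond1,
    hder.mapsTo_peirce0 hn hid hDe⟩

theorem nDer_preserves_peirce {n : ℕ} (hn : 2 ≤ n) {J : Type*} [NonUnitalNonAssocCommRing J]
    (hJordan : ∀ x y : J, ((x * x) * y) * x = (x * x) * (y * x))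
    (h2 : ∀ x : J, x + x = 0 → x = 0)
    (hn1 : ∀ x : J, (n - 1) • x = 0 → x = 0)
    (e : J) (hid : e * e = e) (hne : e ≠ 0) (hnu : ∃ x : J, e * x ≠ x)
    (hcond1 : ∀ a ∈ peirce1 e, (∀ t ∈ peirceHalf e, t * a = 0) → a = 0)
    (hcond1' : ∀ a ∈ peirce0 e, (∀ t ∈ peirceHalf e, t * a = 0) → a = 0)
    (hcond2 : ∀ a ∈ peirce0 e, (∀ t ∈ peirce0 e, t * a = 0) → a = 0)
    (hcond3 : ∀ a ∈ peirceHalf e, (∀ t ∈ peirce0 e, t * a = 0) → a = 0)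
    (D : J → J) (hder : IsNDer n D) (hDe : D e = 0) :
    (∀ a ∈ peirce1 e, D a ∈ peirce1 e) ∧
    (∀ a ∈ peirceHalf e, D a ∈ peirceHalf e) ∧
    (∀ a ∈ peirce0 e, D a ∈ peirce0 e) :=
  nDer_preserves_peirce_general hn hJordan h2 e hid hcond1 D hder hDe
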